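/- The function H: ℝ₊^I → ℝ is continuous; H(n) = 0 for every n ∈ M_α; and H(n) > 0 for every n ∈ ℝ₊^I \ M_α. -/

import Mathlib

open Real Set

noncomputable section

/-- Feasible set for the bandwidth allocation problem at state `n`: the vector
`Λ⁺ = (Λ_i : i ∈ I₊(n))` is embedded in `ℝ^I` by requiring `L i = 0` whenever `n i = 0`. -/
def Feasible {I J : ℕ} (A : Fin J → Fin I → ℝ) (C : Fin J → ℝ)
    (n : Fin I → ℝ) : Set (Fin I → ℝ) :=
  {L | (∀ i, 0 ≤ L i) ∧ (∀ i, n i = 0 → L i = 0) ∧ ∀ j, ∑ i, A j i * L i ≤ C j}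

/-- The objective `G_n(Λ⁺)`, taking the value `⊥ = -∞` when `α ≥ 1` and some
coordinate of `Λ⁺` in `I₊(n)` vanishes. -/
def Gfun {I : ℕ} (α : ℝ) (κ : Fin I → ℝ) (n L : Fin I → ℝ) : EReal :=
  if 1 ≤ α ∧ ∃ i, 0 < n i ∧ L i = 0 then ⊥
  else if α = 1 then
    ((∑ i, if 0 < n i then κ i * n i * Real.log (L i) else 0 : ℝ) : EReal)
  else
    ((∑ i, if 0 < n i then κ i * n i ^ α * L i ^ (1 - α) / (1 - α) else 0 : ℝ) : EReal)

/-- `L` is an optimal weighted α-fair bandwidth allocation for the state `n`,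
i.e. a maximizer of `G_n` over the feasible set for `n` (with `L i = 0` for `i ∈ I₀(n)`). -/
def IsAlloc {I J : ℕ} (A : Fin J → Fin I → ℝ) (C : Fin J → ℝ) (α : ℝ)
    (κ : Fin I → ℝ) (n L : Fin I → ℝ) : Prop :=
  L ∈ Feasible A C n ∧ ∀ L' ∈ Feasible A C n, Gfun α κ n L' ≤ Gfun α κ n L

/-- `f` is absolutely continuous on `[0, T]` for every `T > 0` (ε-δ definition with
finitely many pairwise disjoint subintervals). -/
def AbsContNonneg (f : ℝ → ℝ) : Prop :=
  ∀ T > (0:ℝ), ∀ ε > (0:ℝ), ∃ δ > (0:ℝ), ∀ (m : ℕ) (a b : Fin m → ℝ),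
    (∀ k, 0 ≤ a k ∧ a k ≤ b k ∧ b k ≤ T) →
    (∀ k l, k < l → b k ≤ a l ∨ b l ≤ a k) →
    (∑ k, (b k - a k)) < δ → (∑ k, |f (b k) - f (a k)|) < ε

/-- Fluid model solution: `n : [0,∞) → ℝ₊^I` absolutely continuous, and at every
regular point `t` the derivative conditions (13) and capacity condition (14) hold. -/
def IsFluidSol {I J : ℕ} (A : Fin J → Fin I → ℝ) (C : Fin J → ℝ)
    (ν μ : Fin I → ℝ) (Λ : (Fin I → ℝ) → Fin I → ℝ)
    (n : ℝ → Fin I → ℝ) : Prop :=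
  (∀ i, AbsContNonneg fun t => n t i) ∧
  (∀ t ∈ Ici (0:ℝ), ∀ i, 0 ≤ n t i) ∧
  ∀ t ∈ Ici (0:ℝ),
    (∀ i, DifferentiableWithinAt ℝ (fun s => n s i) (Ici 0) t) →
    (∀ i, (0 < n t i →
        HasDerivWithinAt (fun s => n s i) (ν i - μ i * Λ (n t) i) (Ici 0) t) ∧
      (n t i = 0 → HasDerivWithinAt (fun s => n s i) 0 (Ici 0) t)) ∧
    ∀ j, (∑ i, A j i * (if 0 < n t i then Λ (n t) i else ν i / μ i)) ≤ C j

/-- The set `J*` of critically loaded resources. -/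
def Jstar {I J : ℕ} (A : Fin J → Fin I → ℝ) (C : Fin J → ℝ)
    (ν μ : Fin I → ℝ) : Set (Fin J) :=
  {j | ∑ i, A j i * (ν i / μ i) = C j}

/-- The workload map `w(n)`. -/
def wl {I J : ℕ} (A : Fin J → Fin I → ℝ) (μ : Fin I → ℝ)
    (n : Fin I → ℝ) : Fin J → ℝ :=
  fun j => ∑ i, A j i * n i / μ i

/-- Feasible set of the workload optimization problem (22) for workload `w`. -/
def WFeasible {I J : ℕ} (A : Fin J → Fin I → ℝ) (C : Fin J → ℝ)
    (ν μ : Fin I → ℝ) (w : Fin J → ℝ) : Set (Fin I → ℝ) :=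
  {m | (∀ i, 0 ≤ m i) ∧ ∀ j ∈ Jstar A C ν μ, w j ≤ ∑ i, A j i * m i / μ i}

/-- The Lyapunov function `F`. -/
def Ffun {I : ℕ} (α : ℝ) (κ ν μ : Fin I → ℝ) (n : Fin I → ℝ) : ℝ :=
  (1 / (α + 1)) * ∑ i, ν i * κ i * μ i ^ (α - 1) * (n i / ν i) ^ (α + 1)

/-- The function `K` (the derivative of `F` along fluid model solutions). -/
def Kfun {I : ℕ} (α : ℝ) (κ ν μ : Fin I → ℝ)
    (Λ : (Fin I → ℝ) → Fin I → ℝ) (n : Fin I → ℝ) : ℝ :=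
  ∑ i, if 0 < n i then κ i * (μ i * n i / ν i) ^ α * (ν i / μ i - Λ n i) else 0

/-!
`F` is convex and separable, so `n` minimises `F` among the states whose critical workloads are
at least `w(n)` iff `Σ ∂F/∂n_i (m_i - n_i) ≥ 0` for all such `m`. The α-fair objective `G_n` is
strictly concave with `∂G_n/∂Λ_i (ρ) = μ_i ∂F/∂n_i (n)`, so `Λ(n) = ρ` on `I₊(n)`, i.e. `n` is
invariant, iff `Σ ∂F/∂n_i (μ_i L_i - ν_i) ≤ 0` for every feasible allocation `L`. The two
first-order conditions are equivalent: moving `n` along the drift `ν - μ L` does not lower critical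
workloads, and perturbing `ρ` by `ε (n - m) / μ` on `I₊(n)` keeps the allocation feasible. Hence
the invariant states are exactly the minimisers of `F` at their own workload, where `H = 0`, and
`H > 0` elsewhere.
-/

open Filter Topology Finset

theorem ConvexOn.add_deriv_mul_sub_le {S : Set ℝ} {f : ℝ → ℝ} {f' x y : ℝ}
    (hf : ConvexOn ℝ S f) (hx : x ∈ S) (hy : y ∈ S) (hf' : HasDerivAt f f' x) :
    f x + f' * (y - x) ≤ f y := by
  rcases lt_trichotomy y x with h | rfl | h
  · have := hf.slope_le_of_hasDerivAt hy hx h hf'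
    rw [slope_def_field, div_le_iff₀ (by linarith)] at this
    linarith
  · simp
  · have := hf.le_slope_of_hasDerivAt hx hy h hf'
    rw [slope_def_field, le_div_iff₀ (by linarith)] at this
    linarith

theorem StrictConcaveOn.lt_add_deriv_mul_sub {S : Set ℝ} {f : ℝ → ℝ} {f' x y : ℝ}
    (hf : StrictConcaveOn ℝ S f) (hx : x ∈ S) (hy : y ∈ S) (hxy : y ≠ x)
    (hf' : HasDerivAt f f' x) : f y < f x + f' * (y - x) := by
  rcases hxy.lt_or_gt with h | h
  · have := hf.lt_slope_of_hasDerivAt hy hx h hf'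
    rw [slope_def_field, lt_div_iff₀ (by linarith)] at this
    linarith
  · have := hf.slope_lt_of_hasDerivAt hx hy h hf'
    rw [slope_def_field, div_lt_iff₀ (by linarith)] at this
    linarith

theorem Real.rpow_add_mul_sub_le {p x y : ℝ} (hp : 1 ≤ p) (hx : 0 ≤ x) (hy : 0 ≤ y) :
    x ^ p + p * x ^ (p - 1) * (y - x) ≤ y ^ p :=
  (convexOn_rpow hp).add_deriv_mul_sub_le hx hy (hasDerivAt_rpow_const (Or.inr hp))

def utility (α x : ℝ) : ℝ := if α = 1 then log x else x ^ (1 - α) / (1 - α)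

theorem hasDerivAt_utility (α : ℝ) {x : ℝ} (hx : 0 < x) :
    HasDerivAt (utility α) (x ^ (-α)) x := by
  by_cases h : α = 1
  · subst h
    have hU : utility 1 = log := funext fun _ => if_pos rfl
    simpa [hU, rpow_neg_one] using hasDerivAt_log hx.ne'
  · have h1 : 1 - α ≠ 0 := sub_ne_zero.2 (Ne.symm h)
    have hU : utility α = fun x => x ^ (1 - α) / (1 - α) := funext fun _ => if_neg h
    rw [hU]
    refine ((hasDerivAt_rpow_const (Or.inl hx.ne')).div_const (1 - α)).congr_deriv ?_
    rw [sub_sub_cancel_left, mul_div_cancel_left₀ _ h1]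

theorem strictConcaveOn_utility {α : ℝ} (hα : 0 < α) : StrictConcaveOn ℝ (Ioi 0) (utility α) := by
  refine StrictAntiOn.strictConcaveOn_of_deriv (convex_Ioi 0)
    (fun x hx => (hasDerivAt_utility α hx).continuousAt.continuousWithinAt) ?_
  rw [interior_Ioi]
  intro x hx y hy hxy
  rw [(hasDerivAt_utility α hx).deriv, (hasDerivAt_utility α hy).deriv]
  exact rpow_lt_rpow_of_neg hx hxy (neg_lt_zero.2 hα)

theorem utility_lt_add_rpow_neg_mul_sub {α x y : ℝ} (hα : 0 < α) (hx : 0 < x) (hy : 0 ≤ y)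
    (hy₀ : 1 ≤ α → y ≠ 0) (hxy : y ≠ x) :
    utility α y < utility α x + x ^ (-α) * (y - x) := by
  rcases hy.eq_or_lt with rfl | hy
  · have hα1 : α < 1 := lt_of_not_ge fun h => hy₀ h rfl
    have h1 : 0 < 1 - α := sub_pos.2 hα1
    have hx1 : x ^ (-α) * x = x ^ (1 - α) := by
      rw [sub_eq_neg_add, rpow_add hx, rpow_one]
    simp only [utility, hα1.ne, if_false, zero_rpow h1.ne', zero_div, zero_sub, mul_neg, hx1]
    have : 0 < x ^ (1 - α) := rpow_pos_of_pos hx _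
    have key : x ^ (1 - α) / (1 - α) + -x ^ (1 - α) = α * x ^ (1 - α) / (1 - α) := by
      field_simp; ring
    rw [key]
    positivity
  · exact (strictConcaveOn_utility hα).lt_add_deriv_mul_sub hx hy hxy (hasDerivAt_utility α hx)

section Separable

variable {ι : Type*} [Fintype ι] {φ : ι → ℝ → ℝ} {φ' x y : ι → ℝ} {s : Set (ι → ℝ)}

theorem hasFDerivAt_sum_apply (h : ∀ i, HasDerivAt (φ i) (φ' i) (x i)) :
    HasFDerivAt (fun z : ι → ℝ => ∑ i, φ i (z i))
      (∑ i, φ' i • ContinuousLinearMap.proj (R := ℝ) (φ := fun _ : ι => ℝ) i) x :=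
  HasFDerivAt.fun_sum fun i _ => (h i).comp_hasFDerivAt x (hasFDerivAt_apply i x)

theorem IsMinOn.sum_deriv_mul_sub_nonneg (hmin : IsMinOn (fun z : ι → ℝ => ∑ i, φ i (z i)) s x)
    (h : ∀ i, HasDerivAt (φ i) (φ' i) (x i)) (hxy : openSegment ℝ x y ⊆ s) :
    0 ≤ ∑ i, φ' i * (y i - x i) := by
  simpa using hmin.localize.hasFDerivWithinAt_nonneg (hasFDerivAt_sum_apply h).hasFDerivWithinAt
    (sub_mem_posTangentConeAt_of_openSegment_subset hxy)

theorem IsMaxOn.sum_deriv_mul_sub_nonpos (hmax : IsMaxOn (fun z : ι → ℝ => ∑ i, φ i (z i)) s x)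
    (h : ∀ i, HasDerivAt (φ i) (φ' i) (x i)) (hxy : openSegment ℝ x y ⊆ s) :
    ∑ i, φ' i * (y i - x i) ≤ 0 := by
  simpa using hmax.localize.hasFDerivWithinAt_nonpos (hasFDerivAt_sum_apply h).hasFDerivWithinAt
    (sub_mem_posTangentConeAt_of_openSegment_subset hxy)

theorem eventually_nonneg_add_mul (hx : ∀ i, 0 ≤ x i) (hy : ∀ i, x i = 0 → 0 ≤ y i) :
    ∀ᶠ t in 𝓝[>] (0 : ℝ), ∀ i, 0 ≤ x i + t * y i := by
  refine eventually_all.2 fun i => ?_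
  rcases (hx i).eq_or_lt with h | h
  · filter_upwards [self_mem_nhdsWithin] with t (ht : 0 < t)
    rw [← h, zero_add]
    exact mul_nonneg ht.le (hy i h.symm)
  · have : Tendsto (fun t : ℝ => x i + t * y i) (𝓝[>] 0) (𝓝 (x i)) := by
      refine ((show Continuous fun t : ℝ => x i + t * y i by fun_prop).tendsto' 0 _ ?_).mono_left
        nhdsWithin_le_nhds
      simp
    exact (this.eventually_const_lt h).mono fun t ht => ht.le

end Separable

variable {I J : ℕ} {A : Fin J → Fin I → ℝ} {C : Fin J → ℝ} {α : ℝ} {κ ν μ n m : Fin I → ℝ}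

def Fgrad (α : ℝ) (κ ν μ n : Fin I → ℝ) (i : Fin I) : ℝ :=
  κ i * μ i ^ (α - 1) * (n i / ν i) ^ α

theorem Ffun_eq_sum (m : Fin I → ℝ) :
    Ffun α κ ν μ m = ∑ i, ν i * κ i * μ i ^ (α - 1) * (m i / ν i) ^ (α + 1) / (α + 1) := by
  rw [Ffun, mul_sum]
  exact sum_congr rfl fun i _ => by ring

theorem continuous_Ffun (hα : 0 < α) : Continuous (Ffun α κ ν μ) :=
  continuous_const.mul <| continuous_finsetSum _ fun i _ => continuous_const.mul <|
    ((continuous_apply i).div_const _).rpow_const fun _ => Or.inr (by linarith)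

theorem continuous_Fgrad (hα : 0 < α) (i : Fin I) : Continuous fun n => Fgrad α κ ν μ n i :=
  continuous_const.mul <| ((continuous_apply i).div_const _).rpow_const fun _ => Or.inr hα.le

theorem Fgrad_eq_zero (hα : 0 < α) {i : Fin I} (h : n i = 0) : Fgrad α κ ν μ n i = 0 := by
  rw [Fgrad, h, zero_div, zero_rpow hα.ne', mul_zero]

theorem Fgrad_mono (hα : 0 < α) (hκ : ∀ i, 0 < κ i) (hν : ∀ i, 0 < ν i) (hμ : ∀ i, 0 < μ i)
    {x y : Fin I → ℝ} {i : Fin I} (hx : 0 ≤ x i) (hxy : x i ≤ y i) :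
    Fgrad α κ ν μ x i ≤ Fgrad α κ ν μ y i := by
  have := hκ i; have := hμ i; have := hν i
  unfold Fgrad
  gcongr

theorem hasDerivAt_Ffun_term (hα : 0 < α) (hν : ∀ i, 0 < ν i) (i : Fin I) (x : ℝ) :
    HasDerivAt (fun x => ν i * κ i * μ i ^ (α - 1) * (x / ν i) ^ (α + 1) / (α + 1))
      (κ i * μ i ^ (α - 1) * (x / ν i) ^ α) x := by
  have := hν i
  refine ((((hasDerivAt_id x).div_const (ν i)).rpow_const (p := α + 1)
    (Or.inr (by linarith))).const_mul (ν i * κ i * μ i ^ (α - 1))).div_const (α + 1)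
    |>.congr_deriv ?_
  rw [add_sub_cancel_right, id]
  field_simp

theorem Ffun_add_sum_Fgrad_le (hα : 0 < α) (hκ : ∀ i, 0 < κ i) (hν : ∀ i, 0 < ν i)
    (hμ : ∀ i, 0 < μ i) (hn : ∀ i, 0 ≤ n i) (hm : ∀ i, 0 ≤ m i) :
    Ffun α κ ν μ n + ∑ i, Fgrad α κ ν μ n i * (m i - n i) ≤ Ffun α κ ν μ m := by
  rw [Ffun_eq_sum, Ffun_eq_sum, ← sum_add_distrib]
  gcongr with i
  have := hκ i; have := hμ i; have := hν i
  have h := rpow_add_mul_sub_le (p := α + 1) (by linarith) (div_nonneg (hn i) (hν i).le)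
    (div_nonneg (hm i) (hν i).le)
  have hc : 0 ≤ ν i * κ i * μ i ^ (α - 1) / (α + 1) := by positivity
  calc _ = ν i * κ i * μ i ^ (α - 1) / (α + 1) * ((n i / ν i) ^ (α + 1)
        + (α + 1) * (n i / ν i) ^ (α + 1 - 1) * (m i / ν i - n i / ν i)) := by
          rw [add_sub_cancel_right, Fgrad]; field_simp
    _ ≤ ν i * κ i * μ i ^ (α - 1) / (α + 1) * (m i / ν i) ^ (α + 1) := by gcongr
    _ = _ := by ring

theorem Ffun_add_le (hα : 0 < α) (hκ : ∀ i, 0 < κ i) (hν : ∀ i, 0 < ν i) (hμ : ∀ i, 0 < μ i)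
    {x d r : Fin I → ℝ} (hx : 0 ≤ x) (hxr : x ≤ r) (hd : 0 ≤ d) :
    Ffun α κ ν μ (x + d) ≤ Ffun α κ ν μ x + ∑ i, Fgrad α κ ν μ (r + d) i * d i := by
  have hxd : 0 ≤ x + d := add_nonneg hx hd
  have h := Ffun_add_sum_Fgrad_le hα hκ hν hμ hxd hx
  have hmono : ∑ i, Fgrad α κ ν μ (x + d) i * d i ≤ ∑ i, Fgrad α κ ν μ (r + d) i * d i :=
    sum_le_sum fun i _ => mul_le_mul_of_nonneg_right
      (Fgrad_mono hα hκ hν hμ (hxd i) (add_le_add (hxr i) le_rfl)) (hd i)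
  simp only [Pi.add_apply, sub_add_cancel_left, mul_neg, sum_neg_distrib] at h
  linarith

theorem le_of_Ffun_le (hα : 0 < α) (hκ : ∀ i, 0 < κ i) (hν : ∀ i, 0 < ν i) (hμ : ∀ i, 0 < μ i)
    {B : ℝ} (hm : ∀ i, 0 ≤ m i) (hB : Ffun α κ ν μ m ≤ B) (i : Fin I) :
    m i ≤ ν i * ((α + 1) * B / (ν i * κ i * μ i ^ (α - 1))) ^ (α + 1)⁻¹ := by
  have := hκ i; have := hμ i; have := hν i
  have hc : 0 < ν i * κ i * μ i ^ (α - 1) := by positivity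
  have hterm : ν i * κ i * μ i ^ (α - 1) * (m i / ν i) ^ (α + 1) / (α + 1) ≤ B := by
    refine le_trans ?_ (Ffun_eq_sum m ▸ hB)
    refine single_le_sum (f := fun i => ν i * κ i * μ i ^ (α - 1) * (m i / ν i) ^ (α + 1) / (α + 1))
      (fun k _ => ?_) (mem_univ i)
    have := hκ k; have := hμ k; have := hν k; have := hm k
    positivity
  have hpow : (m i / ν i) ^ (α + 1) ≤ (α + 1) * B / (ν i * κ i * μ i ^ (α - 1)) := by
    rw [le_div_iff₀ hc]
    rw [div_le_iff₀ (by linarith)] at hterm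
    linarith
  rw [← div_le_iff₀' (hν i)]
  exact (le_rpow_inv_iff_of_pos (div_nonneg (hm i) (hν i).le)
    ((rpow_nonneg (div_nonneg (hm i) (hν i).le) _).trans hpow) (by linarith)).2 hpow

theorem isMinOn_Ffun_iff (hα : 0 < α) (hκ : ∀ i, 0 < κ i) (hν : ∀ i, 0 < ν i)
    (hμ : ∀ i, 0 < μ i) {s : Set (Fin I → ℝ)} (hs : Convex ℝ s) (hs₀ : ∀ m ∈ s, ∀ i, 0 ≤ m i)
    (hn : n ∈ s) :
    IsMinOn (Ffun α κ ν μ) s n ↔ ∀ m ∈ s, 0 ≤ ∑ i, Fgrad α κ ν μ n i * (m i - n i) := by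
  refine ⟨fun h m hm => ?_, fun h => isMinOn_iff.2 fun m hm => ?_⟩
  · rw [funext (Ffun_eq_sum (κ := κ) (ν := ν) (μ := μ))] at h
    exact h.sum_deriv_mul_sub_nonneg (fun i => hasDerivAt_Ffun_term hα hν i (n i))
      (hs.openSegment_subset hn hm)
  · linarith [Ffun_add_sum_Fgrad_le hα hκ hν hμ (hs₀ n hn) (hs₀ m hm), h m hm]

theorem wl_nonneg (hA : ∀ j i, 0 ≤ A j i) (hμ : ∀ i, 0 < μ i) (hn : ∀ i, 0 ≤ n i) :
    ∀ j, 0 ≤ wl A μ n j := fun j =>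
  sum_nonneg fun i _ => div_nonneg (mul_nonneg (hA j i) (hn i)) (hμ i).le

theorem wl_mono (hA : ∀ j i, 0 ≤ A j i) (hμ : ∀ i, 0 < μ i) {n n' : Fin I → ℝ} (h : n ≤ n') :
    wl A μ n ≤ wl A μ n' := fun j =>
  sum_le_sum fun i _ => div_le_div_of_nonneg_right (mul_le_mul_of_nonneg_left (h i) (hA j i))
    (hμ i).le

theorem wl_add (n n' : Fin I → ℝ) : wl A μ (n + n') = wl A μ n + wl A μ n' := by
  ext j
  simp only [wl, Pi.add_apply, mul_add, add_div, sum_add_distrib]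

theorem self_mem_WFeasible (hn : ∀ i, 0 ≤ n i) : n ∈ WFeasible A C ν μ (wl A μ n) :=
  ⟨hn, fun _ _ => le_rfl⟩

theorem convex_WFeasible (w : Fin J → ℝ) : Convex ℝ (WFeasible A C ν μ w) := by
  intro x hx y hy a b ha hb hab
  refine ⟨fun i => ?_, fun j hj => ?_⟩
  · have := hx.1 i; have := hy.1 i
    simp only [Pi.add_apply, Pi.smul_apply, smul_eq_mul]
    positivity
  · have e : ∑ i, A j i * (a • x + b • y) i / μ i = a * wl A μ x j + b * wl A μ y j := by
      simp only [wl, mul_sum, ← sum_add_distrib]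
      exact sum_congr rfl fun i _ => by simp only [Pi.add_apply, Pi.smul_apply, smul_eq_mul]; ring
    have hxj : w j ≤ wl A μ x j := hx.2 j hj
    have hyj : w j ≤ wl A μ y j := hy.2 j hj
    rw [e, ← one_mul (w j), ← hab, add_mul]
    exact add_le_add (mul_le_mul_of_nonneg_left hxj ha) (mul_le_mul_of_nonneg_left hyj hb)

theorem add_sub_mem_WFeasible (hA : ∀ j i, 0 ≤ A j i) (hμ : ∀ i, 0 < μ i) {n₀ n' : Fin I → ℝ}
    (hm : m ∈ WFeasible A C ν μ (wl A μ n₀)) (h₀ : n₀ ≤ n') (h : n ≤ n') :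
    m + (n' - n₀) ∈ WFeasible A C ν μ (wl A μ n) := by
  refine ⟨fun i => add_nonneg (hm.1 i) (sub_nonneg.2 (h₀ i)), fun j hj => ?_⟩
  calc wl A μ n j ≤ wl A μ n' j := wl_mono hA hμ h j
    _ = wl A μ n₀ j + wl A μ (n' - n₀) j := by rw [← Pi.add_apply, ← wl_add, add_sub_cancel]
    _ ≤ wl A μ m j + wl A μ (n' - n₀) j := add_le_add (hm.2 j hj) le_rfl
    _ = wl A μ (m + (n' - n₀)) j := by rw [wl_add, Pi.add_apply]

theorem convex_Feasible (n : Fin I → ℝ) : Convex ℝ (Feasible A C n) := by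
  intro x hx y hy a b ha hb hab
  refine ⟨fun i => ?_, fun i hi => ?_, fun j => ?_⟩
  · have := hx.1 i; have := hy.1 i
    simp only [Pi.add_apply, Pi.smul_apply, smul_eq_mul]
    positivity
  · simp [hx.2.1 i hi, hy.2.1 i hi]
  · have e : ∑ i, A j i * (a • x + b • y) i = a * ∑ i, A j i * x i + b * ∑ i, A j i * y i := by
      simp only [mul_sum, ← sum_add_distrib]
      exact sum_congr rfl fun i _ => by simp only [Pi.add_apply, Pi.smul_apply, smul_eq_mul]; ring
    rw [e, ← one_mul (C j), ← hab, add_mul]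
    exact add_le_add (mul_le_mul_of_nonneg_left (hx.2.2 j) ha)
      (mul_le_mul_of_nonneg_left (hy.2.2 j) hb)

def rhoPlus (ν μ n : Fin I → ℝ) (i : Fin I) : ℝ := if 0 < n i then ν i / μ i else 0

theorem rhoPlus_mem_Feasible (hA : ∀ j i, 0 ≤ A j i) (hν : ∀ i, 0 < ν i) (hμ : ∀ i, 0 < μ i)
    (hload : ∀ j, ∑ i, A j i * (ν i / μ i) ≤ C j) : rhoPlus ν μ n ∈ Feasible A C n := by
  have hρ : ∀ i, 0 ≤ ν i / μ i := fun i => (div_pos (hν i) (hμ i)).le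
  refine ⟨fun i => ?_, fun i hi => by simp [rhoPlus, hi],
    fun j => (sum_le_sum fun i _ => ?_).trans (hload j)⟩
  · unfold rhoPlus; split_ifs <;> simp [hρ i]
  · unfold rhoPlus; split_ifs <;> simp [mul_nonneg (hA j i) (hρ i)]

theorem isFluidSol_const_iff {Λ : (Fin I → ℝ) → Fin I → ℝ} (hμ : ∀ i, 0 < μ i)
    (hload : ∀ j, ∑ i, A j i * (ν i / μ i) ≤ C j) (hn : ∀ i, 0 ≤ n i) :
    IsFluidSol A C ν μ Λ (fun _ => n) ↔ ∀ i, 0 < n i → Λ n i = ν i / μ i := by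
  constructor
  · intro h i hi
    have hderiv := ((h.2.2 0 self_mem_Ici fun _ => differentiableWithinAt_const _).1 i).1 hi
    have h0 : ν i - μ i * Λ n i = 0 :=
      (uniqueDiffOn_Ici 0 0 self_mem_Ici).eq_deriv _ hderiv (hasDerivWithinAt_const _ _ _)
    rw [eq_div_iff (hμ i).ne']
    linarith
  · intro hρ
    refine ⟨fun i T _ ε hε => ⟨1, one_pos, fun _ _ _ _ _ _ => by simpa using hε⟩,
      fun _ _ => hn, fun _ _ _ => ⟨fun i => ⟨fun hi => ?_, fun _ => hasDerivWithinAt_const _ _ _⟩,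
      fun j => ?_⟩⟩
    · rw [hρ i hi, mul_div_cancel₀ _ (hμ i).ne', sub_self]
      exact hasDerivWithinAt_const _ _ _
    · refine le_of_eq_of_le (sum_congr rfl fun i _ => ?_) (hload j)
      split_ifs with hi
      · rw [hρ i hi]
      · rfl

/-- The weighted α-fair objective `G_n` as a real number, i.e. when it is not `-∞`. -/
def fairUtility (α : ℝ) (κ n L : Fin I → ℝ) : ℝ :=
  ∑ i, if 0 < n i then κ i * n i ^ α * utility α (L i) else 0

theorem Gfun_eq_fairUtility {L : Fin I → ℝ} (h : ¬(1 ≤ α ∧ ∃ i, 0 < n i ∧ L i = 0)) :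
    Gfun α κ n L = fairUtility α κ n L := by
  rw [Gfun, if_neg h]
  split_ifs with hα
  · subst hα
    simp [fairUtility, utility]
  · simp [fairUtility, utility, hα, mul_div_assoc]

theorem mul_rpow_neg_eq_mul_Fgrad (hν : ∀ i, 0 < ν i) (hμ : ∀ i, 0 < μ i) {i : Fin I}
    (hn : 0 ≤ n i) : κ i * n i ^ α * (ν i / μ i) ^ (-α) = μ i * Fgrad α κ ν μ n i := by
  have hνi := hν i; have hμi := hμ i
  rw [Fgrad, rpow_neg (by positivity), div_rpow hn hνi.le, div_rpow hνi.le hμi.le,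
    rpow_sub_one hμi.ne']
  field_simp

/-- First-order optimality of `ρ` on `I₊(n)` in the allocation problem, written with
`∂G_n/∂Λ_i (ρ) = μ_i ∂F/∂n_i (n)`. -/
def AllocStationary (A : Fin J → Fin I → ℝ) (C : Fin J → ℝ) (α : ℝ) (κ ν μ n : Fin I → ℝ) :
    Prop :=
  ∀ L ∈ Feasible A C n, ∑ i, Fgrad α κ ν μ n i * (μ i * L i - ν i) ≤ 0

def WorkloadStationary (A : Fin J → Fin I → ℝ) (C : Fin J → ℝ) (α : ℝ) (κ ν μ n : Fin I → ℝ) :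
    Prop :=
  ∀ m ∈ WFeasible A C ν μ (wl A μ n), 0 ≤ ∑ i, Fgrad α κ ν μ n i * (m i - n i)

theorem fairUtility_term_lt (hα : 0 < α) (hκ : ∀ i, 0 < κ i) (hν : ∀ i, 0 < ν i)
    (hμ : ∀ i, 0 < μ i) {i : Fin I} (hn : 0 < n i) {y : ℝ} (hy : 0 ≤ y) (hy₀ : 1 ≤ α → y ≠ 0)
    (hyρ : y ≠ ν i / μ i) :
    κ i * n i ^ α * utility α y
      < κ i * n i ^ α * utility α (ν i / μ i) + Fgrad α κ ν μ n i * (μ i * y - ν i) := by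
  have hc : 0 < κ i * n i ^ α := mul_pos (hκ i) (rpow_pos_of_pos hn α)
  have h := mul_lt_mul_of_pos_left
    (utility_lt_add_rpow_neg_mul_sub hα (div_pos (hν i) (hμ i)) hy hy₀ hyρ) hc
  have e : κ i * n i ^ α * ((ν i / μ i) ^ (-α) * (y - ν i / μ i))
      = Fgrad α κ ν μ n i * (μ i * y - ν i) := by
    rw [← mul_assoc, mul_rpow_neg_eq_mul_Fgrad hν hμ hn.le]
    field_simp [(hμ i).ne']
  rwa [mul_add, e] at h

theorem fairUtility_lt_add (hα : 0 < α) (hκ : ∀ i, 0 < κ i) (hν : ∀ i, 0 < ν i)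
    (hμ : ∀ i, 0 < μ i) (hn : ∀ i, 0 ≤ n i) {L : Fin I → ℝ} (hL : ∀ i, 0 ≤ L i)
    (hL₀ : 1 ≤ α → ∀ i, 0 < n i → L i ≠ 0) (hne : ∃ i, 0 < n i ∧ L i ≠ ν i / μ i) :
    fairUtility α κ n L
      < fairUtility α κ n (rhoPlus ν μ n) + ∑ i, Fgrad α κ ν μ n i * (μ i * L i - ν i) := by
  obtain ⟨i₀, hi₀, hne⟩ := hne
  rw [fairUtility, fairUtility, ← sum_add_distrib]
  refine sum_lt_sum (fun i _ => ?_) ⟨i₀, mem_univ _, ?_⟩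
  · by_cases hi : 0 < n i
    · simp only [rhoPlus, hi, if_true]
      rcases eq_or_ne (L i) (ν i / μ i) with h | h
      · rw [h, mul_div_cancel₀ _ (hμ i).ne', sub_self, mul_zero, add_zero]
      · exact (fairUtility_term_lt hα hκ hν hμ hi (hL i) (fun h1 => hL₀ h1 i hi) h).le
    · simp [hi, Fgrad_eq_zero hα (le_antisymm (not_lt.1 hi) (hn i))]
  · simp only [rhoPlus, hi₀, if_true]
    exact fairUtility_term_lt hα hκ hν hμ hi₀ (hL i₀) (fun h1 => hL₀ h1 i₀ hi₀) hne

theorem Gfun_lt_Gfun_rhoPlus (hα : 0 < α) (hκ : ∀ i, 0 < κ i) (hν : ∀ i, 0 < ν i)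
    (hμ : ∀ i, 0 < μ i) (hn : ∀ i, 0 ≤ n i) (hst : AllocStationary A C α κ ν μ n)
    {L : Fin I → ℝ} (hL : L ∈ Feasible A C n) (hne : ∃ i, 0 < n i ∧ L i ≠ ν i / μ i) :
    Gfun α κ n L < Gfun α κ n (rhoPlus ν μ n) := by
  have hρ : Gfun α κ n (rhoPlus ν μ n) = fairUtility α κ n (rhoPlus ν μ n) :=
    Gfun_eq_fairUtility fun ⟨_, i, hi, h⟩ => by
      simp only [rhoPlus, hi, if_true] at h
      exact (div_pos (hν i) (hμ i)).ne' h
  rw [hρ]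
  by_cases hbot : 1 ≤ α ∧ ∃ i, 0 < n i ∧ L i = 0
  · rw [Gfun, if_pos hbot]
    exact EReal.bot_lt_coe _
  · rw [Gfun_eq_fairUtility hbot, EReal.coe_lt_coe_iff]
    refine (fairUtility_lt_add hα hκ hν hμ hn hL.1 (fun h1 i hi h0 => hbot ⟨h1, i, hi, h0⟩)
      hne).trans_le ?_
    linarith [hst L hL]

theorem eq_rho_of_allocStationary (hα : 0 < α) (hκ : ∀ i, 0 < κ i) (hν : ∀ i, 0 < ν i)
    (hμ : ∀ i, 0 < μ i) (hA : ∀ j i, 0 ≤ A j i) (hload : ∀ j, ∑ i, A j i * (ν i / μ i) ≤ C j)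
    (hn : ∀ i, 0 ≤ n i) {L : Fin I → ℝ} (hL : IsAlloc A C α κ n L)
    (hst : AllocStationary A C α κ ν μ n) : ∀ i, 0 < n i → L i = ν i / μ i := by
  by_contra! hne
  exact (Gfun_lt_Gfun_rhoPlus hα hκ hν hμ hn hst hL.1 hne).not_ge
    (hL.2 _ (rhoPlus_mem_Feasible hA hν hμ hload))

theorem allocStationary_of_eq_rho (hα : 0 < α) (hν : ∀ i, 0 < ν i) (hμ : ∀ i, 0 < μ i)
    (hA : ∀ j i, 0 ≤ A j i) (hload : ∀ j, ∑ i, A j i * (ν i / μ i) ≤ C j) (hn : ∀ i, 0 ≤ n i)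
    {L₀ : Fin I → ℝ} (hL₀ : IsAlloc A C α κ n L₀) (hρ : ∀ i, 0 < n i → L₀ i = ν i / μ i) :
    AllocStationary A C α κ ν μ n := by
  have hL₀ρ : L₀ = rhoPlus ν μ n := funext fun i => by
    by_cases hi : 0 < n i
    · simp [rhoPlus, hi, hρ i hi]
    · simp [rhoPlus, hi, hL₀.1.2.1 i (le_antisymm (not_lt.1 hi) (hn i))]
  set T := {L ∈ Feasible A C n | ∀ i, 0 < n i → 0 < L i}
  have hGT : ∀ L ∈ T, Gfun α κ n L = fairUtility α κ n L := fun L hL =>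
    Gfun_eq_fairUtility fun ⟨_, i, hi, h0⟩ => (hL.2 i hi).ne' h0
  have hρT : rhoPlus ν μ n ∈ T :=
    ⟨rhoPlus_mem_Feasible hA hν hμ hload, fun i hi => by
      simpa [rhoPlus, hi] using div_pos (hν i) (hμ i)⟩
  have hmax : IsMaxOn (fairUtility α κ n) T (rhoPlus ν μ n) := isMaxOn_iff.2 fun L hL => by
    have h := hL₀.2 L hL.1
    rwa [hL₀ρ, hGT L hL, hGT _ hρT, EReal.coe_le_coe_iff] at h
  intro L hL
  have hseg : openSegment ℝ (rhoPlus ν μ n) L ⊆ T := fun z hz =>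
    ⟨(convex_Feasible n).openSegment_subset hρT.1 hL hz, fun i hi => by
      obtain ⟨a, b, ha, hb, -, rfl⟩ := hz
      have := hρT.2 i hi; have := hL.1 i
      simp only [Pi.add_apply, Pi.smul_apply, smul_eq_mul]
      positivity⟩
  have hderiv : ∀ i, HasDerivAt (fun y => if 0 < n i then κ i * n i ^ α * utility α y else 0)
      (if 0 < n i then μ i * Fgrad α κ ν μ n i else 0) (rhoPlus ν μ n i) := fun i => by
    by_cases hi : 0 < n i
    · simp only [hi, if_true, rhoPlus]
      rw [← mul_rpow_neg_eq_mul_Fgrad hν hμ hi.le]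
      exact (hasDerivAt_utility α (div_pos (hν i) (hμ i))).const_mul _
    · simp only [hi, if_false]
      exact hasDerivAt_const _ _
  refine le_of_eq_of_le (sum_congr rfl fun i _ => ?_) (hmax.sum_deriv_mul_sub_nonpos hderiv hseg)
  by_cases hi : 0 < n i
  · simp only [rhoPlus, hi, if_true]
    field_simp [(hμ i).ne']
  · simp [hi, Fgrad_eq_zero hα (le_antisymm (not_lt.1 hi) (hn i))]

theorem allocStationary_of_workloadStationary (hν : ∀ i, 0 < ν i) (hμ : ∀ i, 0 < μ i)
    (hn : ∀ i, 0 ≤ n i) (hst : WorkloadStationary A C α κ ν μ n) :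
    AllocStationary A C α κ ν μ n := by
  intro L hL
  -- `ν - μ L` is the fluid drift at `n` under the allocation `L`
  obtain ⟨t, hnn, ht⟩ := ((eventually_nonneg_add_mul (y := fun i => ν i - μ i * L i) hn
    fun i hi => by simp [hL.2.1 i hi, (hν i).le]).and self_mem_nhdsWithin).exists
  have hm : (fun i => n i + t * (ν i - μ i * L i)) ∈ WFeasible A C ν μ (wl A μ n) := by
    refine ⟨hnn, fun j (hj : ∑ i, A j i * (ν i / μ i) = C j) => ?_⟩
    have e : ∑ i, A j i * (n i + t * (ν i - μ i * L i)) / μ i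
        = wl A μ n j + t * (∑ i, A j i * (ν i / μ i) - ∑ i, A j i * L i) := by
      simp only [wl, mul_sub, mul_sum, ← sum_add_distrib, ← sum_sub_distrib]
      exact sum_congr rfl fun i _ => by field_simp [(hμ i).ne']
    rw [e, hj]
    have := mul_nonneg (le_of_lt ht) (sub_nonneg.2 (hL.2.2 j))
    linarith
  have e : ∑ i, Fgrad α κ ν μ n i * (n i + t * (ν i - μ i * L i) - n i)
      = -t * ∑ i, Fgrad α κ ν μ n i * (μ i * L i - ν i) := by
    rw [mul_sum]
    exact sum_congr rfl fun i _ => by ring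
  have h := hst _ hm
  rw [e] at h
  nlinarith [show (0 : ℝ) < t from ht]

theorem sum_mul_rhoPlus_add_le (hA : ∀ j i, 0 ≤ A j i) (hμ : ∀ i, 0 < μ i) (hn : ∀ i, 0 ≤ n i)
    {ε : ℝ} (hεm : ∀ i, ε * m i ≤ ν i) (j : Fin J) :
    ∑ i, A j i * (rhoPlus ν μ n i + ε * (if 0 < n i then (n i - m i) / μ i else 0))
      ≤ ∑ i, A j i * (ν i / μ i) + ε * (wl A μ n j - wl A μ m j) := by
  simp only [wl, mul_sub, mul_sum, ← sum_add_distrib, ← sum_sub_distrib]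
  refine sum_le_sum fun i _ => ?_
  by_cases hi : 0 < n i
  · simp only [rhoPlus, hi, if_true]
    exact le_of_eq (by ring)
  · have hi0 : n i = 0 := le_antisymm (not_lt.1 hi) (hn i)
    simp only [rhoPlus, hi0, lt_irrefl, if_false, mul_zero, add_zero, zero_sub, zero_div]
    have : 0 ≤ A j i * (ν i - ε * m i) / μ i :=
      div_nonneg (mul_nonneg (hA j i) (sub_nonneg.2 (hεm i))) (hμ i).le
    linarith [show A j i * (ν i - ε * m i) / μ i = A j i * (ν i / μ i) - ε * (A j i * m i / μ i)
      by field_simp [(hμ i).ne']]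

theorem eventually_rhoPlus_add_mem_Feasible (hν : ∀ i, 0 < ν i) (hμ : ∀ i, 0 < μ i)
    (hA : ∀ j i, 0 ≤ A j i) (hload : ∀ j, ∑ i, A j i * (ν i / μ i) ≤ C j) (hn : ∀ i, 0 ≤ n i)
    (hm : m ∈ WFeasible A C ν μ (wl A μ n)) :
    ∀ᶠ ε in 𝓝[>] (0 : ℝ),
      rhoPlus ν μ n + ε • (fun i => if 0 < n i then (n i - m i) / μ i else 0) ∈ Feasible A C n := by
  have hρ₀ : ∀ i, rhoPlus ν μ n i = 0 → 0 ≤ if 0 < n i then (n i - m i) / μ i else 0 :=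
    fun i h => by
      by_cases hi : 0 < n i
      · simp only [rhoPlus, hi, if_true] at h
        exact absurd h (div_pos (hν i) (hμ i)).ne'
      · simp [hi]
  have hsmall : ∀ᶠ ε in 𝓝[>] (0 : ℝ), ∀ i, ε * m i ≤ ν i := eventually_all.2 fun i =>
    ((((continuous_id.mul continuous_const).tendsto' 0 0 (by simp)).mono_left
      nhdsWithin_le_nhds).eventually_lt_const (hν i)).mono fun _ h => h.le
  have hcap : ∀ᶠ ε in 𝓝[>] (0 : ℝ), ∀ j,
      ∑ i, A j i * (ν i / μ i) + ε * (wl A μ n j - wl A μ m j) ≤ C j := eventually_all.2 fun j => by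
    rcases (hload j).eq_or_lt with hj | hj
    · filter_upwards [self_mem_nhdsWithin] with ε (hε : 0 < ε)
      have : wl A μ n j ≤ wl A μ m j := hm.2 j hj
      nlinarith
    · refine ((((continuous_const.add (continuous_id.mul continuous_const)).tendsto' 0 _
        (by simp)).mono_left nhdsWithin_le_nhds).eventually_lt_const hj).mono fun _ h => h.le
  filter_upwards [eventually_nonneg_add_mul (rhoPlus_mem_Feasible hA hν hμ hload).1 hρ₀, hsmall,
    hcap] with ε hnn hεm hC
  exact ⟨hnn, fun i hi => by simp [rhoPlus, hi],
    fun j => (sum_mul_rhoPlus_add_le hA hμ hn hεm j).trans (hC j)⟩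

theorem workloadStationary_of_allocStationary (hα : 0 < α) (hν : ∀ i, 0 < ν i)
    (hμ : ∀ i, 0 < μ i) (hA : ∀ j i, 0 ≤ A j i) (hload : ∀ j, ∑ i, A j i * (ν i / μ i) ≤ C j)
    (hn : ∀ i, 0 ≤ n i) (hst : AllocStationary A C α κ ν μ n) :
    WorkloadStationary A C α κ ν μ n := by
  intro m hm
  obtain ⟨ε, hL, hε⟩ := ((eventually_rhoPlus_add_mem_Feasible hν hμ hA hload hn hm).and
    self_mem_nhdsWithin).exists
  have e : ∑ i, Fgrad α κ ν μ n i * (μ i * (rhoPlus ν μ n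
        + ε • (fun i => if 0 < n i then (n i - m i) / μ i else 0)) i - ν i)
      = -ε * ∑ i, Fgrad α κ ν μ n i * (m i - n i) := by
    rw [mul_sum]
    refine sum_congr rfl fun i _ => ?_
    by_cases hi : 0 < n i
    · simp only [Pi.add_apply, Pi.smul_apply, smul_eq_mul, rhoPlus, hi, if_true]
      field_simp [(hμ i).ne']
      ring
    · simp [Fgrad_eq_zero hα (le_antisymm (not_lt.1 hi) (hn i))]
  have h := hst _ hL
  rw [e] at h
  nlinarith [show (0 : ℝ) < ε from hε]

theorem isFluidSol_const_iff_isMinOn (hα : 0 < α) (hκ : ∀ i, 0 < κ i) (hν : ∀ i, 0 < ν i)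
    (hμ : ∀ i, 0 < μ i) (hA : ∀ j i, 0 ≤ A j i) (hload : ∀ j, ∑ i, A j i * (ν i / μ i) ≤ C j)
    {Λ : (Fin I → ℝ) → Fin I → ℝ} (hn : ∀ i, 0 ≤ n i) (hΛ : IsAlloc A C α κ n (Λ n)) :
    IsFluidSol A C ν μ Λ (fun _ => n) ↔
      IsMinOn (Ffun α κ ν μ) (WFeasible A C ν μ (wl A μ n)) n := by
  rw [isFluidSol_const_iff hμ hload hn,
    isMinOn_Ffun_iff hα hκ hν hμ (convex_WFeasible _) (fun m hm => hm.1) (self_mem_WFeasible hn)]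
  constructor
  · exact fun hρ => workloadStationary_of_allocStationary hα hν hμ hA hload hn
      (allocStationary_of_eq_rho hα hν hμ hA hload hn hΛ hρ)
  · exact fun hst => eq_rho_of_allocStationary hα hκ hν hμ hA hload hn hΛ
      (allocStationary_of_workloadStationary hν hμ hn hst)

/-- `Δ(w(n₀)) + (n ⊔ n₀ - n₀)` is feasible for `w(n)` and `Δ(w(n)) + (n ⊔ n₀ - n)` for `w(n₀)`;
the latter costs little because `F(Δ(w(n))) ≤ F(n)` keeps `Δ(w(n))` in a fixed box near `n₀`. -/
theorem continuousOn_Ffun_Δ_wl (hα : 0 < α) (hκ : ∀ i, 0 < κ i) (hν : ∀ i, 0 < ν i)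
    (hμ : ∀ i, 0 < μ i) (hA : ∀ j i, 0 ≤ A j i) {Δ : (Fin J → ℝ) → Fin I → ℝ}
    (hΔ : ∀ w : Fin J → ℝ, (∀ j, 0 ≤ w j) →
      Δ w ∈ WFeasible A C ν μ w ∧ ∀ m ∈ WFeasible A C ν μ w, Ffun α κ ν μ (Δ w) ≤ Ffun α κ ν μ m) :
    ContinuousOn (fun n => Ffun α κ ν μ (Δ (wl A μ n))) {n : Fin I → ℝ | ∀ i, 0 ≤ n i} := by
  intro n₀ hn₀
  set S := {n : Fin I → ℝ | ∀ i, 0 ≤ n i}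
  have hΔS : ∀ n ∈ S, Δ (wl A μ n) ∈ WFeasible A C ν μ (wl A μ n) ∧
      ∀ m ∈ WFeasible A C ν μ (wl A μ n), Ffun α κ ν μ (Δ (wl A μ n)) ≤ Ffun α κ ν μ m :=
    fun n hn => hΔ _ (wl_nonneg hA hμ hn)
  set r : Fin I → ℝ := fun i =>
    ν i * ((α + 1) * (Ffun α κ ν μ n₀ + 1) / (ν i * κ i * μ i ^ (α - 1))) ^ (α + 1)⁻¹
  have hbox : ∀ᶠ n in 𝓝[S] n₀, Δ (wl A μ n) ≤ r := by
    filter_upwards [self_mem_nhdsWithin, ((continuous_Ffun hα).continuousWithinAt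
      (s := S) (x := n₀)).eventually_lt_const (lt_add_one _)] with n hn hFn
    exact le_of_Ffun_le hα hκ hν hμ (hΔS n hn).1.1
      (((hΔS n hn).2 n (self_mem_WFeasible hn)).trans hFn.le)
  have hlow : ∀ᶠ n in 𝓝[S] n₀, Ffun α κ ν μ (Δ (wl A μ n₀))
      - ∑ i, Fgrad α κ ν μ (r + (n ⊔ n₀ - n)) i * (n ⊔ n₀ - n) i
      ≤ Ffun α κ ν μ (Δ (wl A μ n)) := by
    filter_upwards [self_mem_nhdsWithin, hbox] with n hn hr
    have h₁ := (hΔS n₀ hn₀).2 _ (add_sub_mem_WFeasible hA hμ (hΔS n hn).1 le_sup_left le_sup_right)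
    have h₂ := Ffun_add_le hα hκ hν hμ (hΔS n hn).1.1 hr (sub_nonneg.2 (le_sup_left : n ≤ n ⊔ n₀))
    linarith
  have hup : ∀ n ∈ S, Ffun α κ ν μ (Δ (wl A μ n))
      ≤ Ffun α κ ν μ (Δ (wl A μ n₀) + (n ⊔ n₀ - n₀)) := fun n hn =>
    (hΔS n hn).2 _ (add_sub_mem_WFeasible hA hμ (hΔS n₀ hn₀).1 le_sup_right le_sup_left)
  have hsup : Continuous fun n : Fin I → ℝ => n ⊔ n₀ :=
    continuous_pi fun i => (continuous_apply i).max continuous_const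
  refine tendsto_of_tendsto_of_tendsto_of_le_of_le' ?_ ?_ hlow (eventually_nhdsWithin_of_forall hup)
  · have hd : Continuous fun n : Fin I → ℝ => n ⊔ n₀ - n := hsup.sub continuous_id
    have hc : Continuous fun n : Fin I → ℝ =>
        ∑ i, Fgrad α κ ν μ (r + (n ⊔ n₀ - n)) i * (n ⊔ n₀ - n) i :=
      continuous_finsetSum _ fun i _ => ((continuous_Fgrad hα i).comp'
        (continuous_const.add hd)).mul ((continuous_apply i).comp' hd)
    exact ((continuous_const.sub hc).tendsto' n₀ _ (by simp)).mono_left nhdsWithin_le_nhds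
  · have hc : Continuous fun n : Fin I → ℝ => Ffun α κ ν μ (Δ (wl A μ n₀) + (n ⊔ n₀ - n₀)) :=
      (continuous_Ffun hα).comp' (continuous_const.add (hsup.sub continuous_const))
    exact (hc.tendsto' n₀ _ (by simp)).mono_left nhdsWithin_le_nhds

theorem stmt15_general {I J : ℕ}
    (A : Fin J → Fin I → ℝ) (hA01 : ∀ j i, A j i = 0 ∨ A j i = 1)
    (C : Fin J → ℝ)
    (α : ℝ) (hα : 0 < α) (κ : Fin I → ℝ) (hκ : ∀ i, 0 < κ i)
    (ν μ : Fin I → ℝ) (hν : ∀ i, 0 < ν i) (hμ : ∀ i, 0 < μ i)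
    (hload : ∀ j, (∑ i, A j i * (ν i / μ i)) ≤ C j)
    (Λ : (Fin I → ℝ) → Fin I → ℝ)
    (hΛ : ∀ n : Fin I → ℝ, (∀ i, 0 ≤ n i) → IsAlloc A C α κ n (Λ n))
    (Δ : (Fin J → ℝ) → Fin I → ℝ)
    (hΔ : ∀ w : Fin J → ℝ, (∀ j, 0 ≤ w j) →
      Δ w ∈ WFeasible A C ν μ w ∧
        ∀ m ∈ WFeasible A C ν μ w, Ffun α κ ν μ (Δ w) ≤ Ffun α κ ν μ m) :
    ContinuousOn (fun n : Fin I → ℝ => Ffun α κ ν μ n - Ffun α κ ν μ (Δ (wl A μ n)))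
      {n : Fin I → ℝ | ∀ i, 0 ≤ n i} ∧
    ∀ n : Fin I → ℝ, (∀ i, 0 ≤ n i) →
      ((IsFluidSol A C ν μ Λ fun _ => n) →
        Ffun α κ ν μ n - Ffun α κ ν μ (Δ (wl A μ n)) = 0) ∧
      ((¬ IsFluidSol A C ν μ Λ fun _ => n) →
        0 < Ffun α κ ν μ n - Ffun α κ ν μ (Δ (wl A μ n))) := by
  have hA : ∀ j i, 0 ≤ A j i := fun j i => by rcases hA01 j i with h | h <;> simp [h]
  refine ⟨(continuous_Ffun hα).continuousOn.sub (continuousOn_Ffun_Δ_wl hα hκ hν hμ hA hΔ),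
    fun n hn => ?_⟩
  obtain ⟨hΔmem, hΔmin⟩ := hΔ (wl A μ n) (wl_nonneg hA hμ hn)
  have hle := hΔmin n (self_mem_WFeasible hn)
  rw [isFluidSol_const_iff_isMinOn hα hκ hν hμ hA hload hn (hΛ n hn)]
  refine ⟨fun h => by linarith [isMinOn_iff.1 h _ hΔmem], fun h => sub_pos.2 ?_⟩
  refine hle.lt_of_ne fun heq => h (isMinOn_iff.2 fun m hm => ?_)
  exact heq ▸ hΔmin m hm

theorem stmt15 {I J : ℕ} (hI : 0 < I) (hJ : 0 < J)
    (A : Fin J → Fin I → ℝ) (hA01 : ∀ j i, A j i = 0 ∨ A j i = 1)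
    (hAcol : ∀ i, ∃ j, A j i = 1) (hArank : LinearIndependent ℝ A)
    (C : Fin J → ℝ) (hC : ∀ j, 0 < C j)
    (α : ℝ) (hα : 0 < α) (κ : Fin I → ℝ) (hκ : ∀ i, 0 < κ i)
    (ν μ : Fin I → ℝ) (hν : ∀ i, 0 < ν i) (hμ : ∀ i, 0 < μ i)
    (hload : ∀ j, (∑ i, A j i * (ν i / μ i)) ≤ C j)
    (hJs : (Jstar A C ν μ).Nonempty)
    (Λ : (Fin I → ℝ) → Fin I → ℝ)
    (hΛ : ∀ n : Fin I → ℝ, (∀ i, 0 ≤ n i) → IsAlloc A C α κ n (Λ n))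
    (Δ : (Fin J → ℝ) → Fin I → ℝ)
    (hΔ : ∀ w : Fin J → ℝ, (∀ j, 0 ≤ w j) →
      Δ w ∈ WFeasible A C ν μ w ∧
        ∀ m ∈ WFeasible A C ν μ w, Ffun α κ ν μ (Δ w) ≤ Ffun α κ ν μ m) :
    ContinuousOn (fun n : Fin I → ℝ => Ffun α κ ν μ n - Ffun α κ ν μ (Δ (wl A μ n)))
      {n : Fin I → ℝ | ∀ i, 0 ≤ n i} ∧
    ∀ n : Fin I → ℝ, (∀ i, 0 ≤ n i) →
      ((IsFluidSol A C ν μ Λ fun _ => n) →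
        Ffun α κ ν μ n - Ffun α κ ν μ (Δ (wl A μ n)) = 0) ∧
      ((¬ IsFluidSol A C ν μ Λ fun _ => n) →
        0 < Ffun α κ ν μ n - Ffun α κ ν μ (Δ (wl A μ n))) :=
  stmt15_general A hA01 C α hα κ hκ ν μ hν hμ hload Λ hΛ Δ hΔ
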